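/- arXiv:2512.07112 — 4 statements merged into one kernel-verified Lean document; each statement's English description precedes it below -/
import Mathlib

section
/- Let β₁ ∈ [0,1), let n, l be positive integers with 2^l dividing n, and let (G_s)_{s≥1} be a sequence of m×n real matrices. Define the folded gradients G̃_s = G_s·A^(l), the moving average M̃_0 = 0, M̃_s = β₁·M̃_{s−1} + (1−β₁)·G̃_s, the residual R_t = G_t − G̃_t·E^(l), and the reconstructed moment M_t = M̃_t·E^(l) + R_t. Then for every t ≥ 1, the deviation Δ_t = M_t − G_t satisfies Δ_t = (1−β₁)·Σ_{j=1}^{t−1} β₁^j · (G_{t−j} − G_t)·P^(l) − β₁^t · G_t·P^(l), where P^(l) = A^(l)E^(l). -/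
open scoped Matrix

/-- The fold matrix `A^(l) ∈ ℝ^{n × n/2^l}`: (using 0-based indices `i, j`, corresponding to
1-based indices `i+1, j+1`) the entry `A^(l)_{i,j}` is `1/2^l` if
`j·2^l ≤ i < (j+1)·2^l` (i.e. 1-based `(j-1)·2^l + 1 ≤ i ≤ j·2^l`) and `0` otherwise. -/
noncomputable def foldA (n l : ℕ) : Matrix (Fin n) (Fin (n / 2 ^ l)) ℝ :=
  Matrix.of fun i j =>
    if (j : ℕ) * 2 ^ l ≤ (i : ℕ) ∧ (i : ℕ) < ((j : ℕ) + 1) * 2 ^ l then (1 : ℝ) / 2 ^ l else 0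

/-- The unfold matrix `E^(l) ∈ ℝ^{n/2^l × n}`: the entry `E^(l)_{i,j}` is `1` if
`i·2^l ≤ j < (i+1)·2^l` (i.e. 1-based `(i-1)·2^l + 1 ≤ j ≤ i·2^l`) and `0` otherwise. -/
def unfoldE (n l : ℕ) : Matrix (Fin (n / 2 ^ l)) (Fin n) ℝ :=
  Matrix.of fun i j =>
    if (i : ℕ) * 2 ^ l ≤ (j : ℕ) ∧ (j : ℕ) < ((i : ℕ) + 1) * 2 ^ l then (1 : ℝ) else 0

/-- The fold-unfold operator `P^(l) = A^(l) E^(l) ∈ ℝ^{n×n}`. -/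
noncomputable def foldP (n l : ℕ) : Matrix (Fin n) (Fin n) ℝ :=
  foldA n l * unfoldE n l

/-- FOAM deviation identity: with folded gradients `G̃_s = G_s A^(l)`, moving average
`M̃_0 = 0`, `M̃_s = β₁ M̃_{s−1} + (1−β₁) G̃_s`, residual `R_t = G_t − G̃_t E^(l)` and
reconstructed moment `M_t = M̃_t E^(l) + R_t`, for every `t ≥ 1` the deviation
`Δ_t = M_t − G_t` satisfies
`Δ_t = (1−β₁) Σ_{j=1}^{t−1} β₁^j (G_{t−j} − G_t) P^(l) − β₁^t G_t P^(l)`. -/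
theorem foam_deviation_identity {m : ℕ} (n l : ℕ) (hn : 0 < n) (hl : 0 < l)
    (hdvd : 2 ^ l ∣ n) (β₁ : ℝ) (hβ₁ : β₁ ∈ Set.Ico (0 : ℝ) 1)
    (G : ℕ → Matrix (Fin m) (Fin n) ℝ)
    (Gtil : ℕ → Matrix (Fin m) (Fin (n / 2 ^ l)) ℝ)
    (hGtil : ∀ s, Gtil s = G s * foldA n l)
    (Mtil : ℕ → Matrix (Fin m) (Fin (n / 2 ^ l)) ℝ)
    (hMtil0 : Mtil 0 = 0)
    (hMtilrec : ∀ s, 1 ≤ s → Mtil s = β₁ • Mtil (s - 1) + (1 - β₁) • Gtil s)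
    (R : ℕ → Matrix (Fin m) (Fin n) ℝ)
    (hR : ∀ s, R s = G s - Gtil s * unfoldE n l)
    (M : ℕ → Matrix (Fin m) (Fin n) ℝ)
    (hM : ∀ s, M s = Mtil s * unfoldE n l + R s)
    (t : ℕ) (ht : 1 ≤ t) :
    M t - G t =
      (1 - β₁) • (∑ j ∈ Finset.Icc 1 (t - 1), β₁ ^ j • ((G (t - j) - G t) * foldP n l))
        - β₁ ^ t • (G t * foldP n l) := by
  -- closed form for Mtil
  have closed : ∀ s, Mtil s = (1 - β₁) • ∑ j ∈ Finset.range s, β₁ ^ j • Gtil (s - j) := by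
    intro s
    induction s with
    | zero => simpa using hMtil0
    | succ k ih =>
      rw [hMtilrec (k + 1) (Nat.le_add_left 1 k), Nat.add_sub_cancel, ih,
        Finset.sum_range_succ', smul_add]
      congr 1
      · simp only [Finset.smul_sum, smul_smul, Nat.succ_sub_succ]
        apply Finset.sum_congr rfl
        intro j _
        ring_nf
      · simp
  -- basic reduction
  have key : M t - G t = Mtil t * unfoldE n l - G t * foldP n l := by
    rw [hM t, hR t, hGtil t, foldP, Matrix.mul_assoc]
    abel
  rw [key, closed t, Matrix.smul_mul, Matrix.sum_mul]
  have hP : foldA n l * unfoldE n l = foldP n l := rfl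
  simp only [hGtil, Matrix.smul_mul, Matrix.mul_assoc, hP]
  -- index sets
  have hIcc : Finset.Icc 1 (t - 1) = Finset.Ico 1 t := by
    ext x
    simp only [Finset.mem_Icc, Finset.mem_Ico]
    omega
  rw [hIcc]
  have hsplit :
      ∑ j ∈ Finset.range t, β₁ ^ j • (G (t - j) * foldP n l)
        = G t * foldP n l + ∑ j ∈ Finset.Ico 1 t, β₁ ^ j • (G (t - j) * foldP n l) := by
    rw [Finset.range_eq_Ico, Finset.sum_eq_sum_Ico_succ_bot ht]
    simp
  rw [hsplit]
  -- expand RHS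
  have hgeom : (1 - β₁) * ∑ j ∈ Finset.Ico 1 t, β₁ ^ j = β₁ - β₁ ^ t := by
    have hne : β₁ ≠ 1 := ne_of_lt hβ₁.2
    have h1 : ∑ j ∈ Finset.Ico 1 t, β₁ ^ j = (∑ j ∈ Finset.range t, β₁ ^ j) - 1 := by
      rw [Finset.range_eq_Ico, Finset.sum_eq_sum_Ico_succ_bot ht]
      simp
    have h2 : β₁ - 1 ≠ 0 := sub_ne_zero.mpr hne
    rw [h1, geom_sum_eq hne]
    field_simp
    ring
  simp only [Matrix.sub_mul, smul_sub, Finset.sum_sub_distrib, ← Finset.sum_smul]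
  rw [smul_smul, hgeom]
  module
end

section
/- Let β₁ ∈ [0,1), let n, l be positive integers with 2^l dividing n, and let (G_s)_{s≥1} be a sequence of m×n real matrices. With G̃_s = G_s·A^(l), M̃_0 = 0, M̃_s = β₁·M̃_{s−1} + (1−β₁)·G̃_s, R_t = G_t − G̃_t·E^(l), and M_t = M̃_t·E^(l) + R_t, the following intermediate identity holds for every t ≥ 1: M_t − G_t = (1−β₁)·Σ_{j=1}^{t−1} β₁^j · G_{t−j}·P^(l) − β₁ · G_t·P^(l), where P^(l) = A^(l)E^(l). -/
open scoped Matrix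

/-- Intermediate FOAM identity: with folded gradients `G̃_s = G_s A^(l)`, moving average
`M̃_0 = 0`, `M̃_s = β₁ M̃_{s−1} + (1−β₁) G̃_s`, residual `R_t = G_t − G̃_t E^(l)` and
reconstructed moment `M_t = M̃_t E^(l) + R_t`, for every `t ≥ 1` we have
`M_t − G_t = (1−β₁) Σ_{j=1}^{t−1} β₁^j G_{t−j} P^(l) − β₁ G_t P^(l)`. -/
theorem foam_deviation_intermediate {m : ℕ} (n l : ℕ) (hn : 0 < n) (hl : 0 < l)
    (hdvd : 2 ^ l ∣ n) (β₁ : ℝ) (hβ₁ : β₁ ∈ Set.Ico (0 : ℝ) 1)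
    (G : ℕ → Matrix (Fin m) (Fin n) ℝ)
    (Gtil : ℕ → Matrix (Fin m) (Fin (n / 2 ^ l)) ℝ)
    (hGtil : ∀ s, Gtil s = G s * foldA n l)
    (Mtil : ℕ → Matrix (Fin m) (Fin (n / 2 ^ l)) ℝ)
    (hMtil0 : Mtil 0 = 0)
    (hMtilrec : ∀ s, 1 ≤ s → Mtil s = β₁ • Mtil (s - 1) + (1 - β₁) • Gtil s)
    (R : ℕ → Matrix (Fin m) (Fin n) ℝ)
    (hR : ∀ s, R s = G s - Gtil s * unfoldE n l)
    (M : ℕ → Matrix (Fin m) (Fin n) ℝ)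
    (hM : ∀ s, M s = Mtil s * unfoldE n l + R s)
    (t : ℕ) (ht : 1 ≤ t) :
    M t - G t =
      (1 - β₁) • (∑ j ∈ Finset.Icc 1 (t - 1), β₁ ^ j • (G (t - j) * foldP n l))
        - β₁ • (G t * foldP n l) := by

  -- closed form for Mtil
  have key : ∀ s, Mtil s = (1 - β₁) • ∑ j ∈ Finset.range s, β₁ ^ j • Gtil (s - j) := by
    intro s
    induction s with
    | zero => simp [hMtil0]
    | succ k ih =>
      rw [hMtilrec (k + 1) (by omega)]
      simp only [Nat.add_sub_cancel]
      rw [ih, Finset.sum_range_succ']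
      simp only [Nat.succ_sub_succ, Nat.sub_zero, pow_zero, one_smul, smul_add,
        Finset.smul_sum, smul_smul]
      have : ∀ j : ℕ, β₁ * ((1 - β₁) * β₁ ^ j) = (1 - β₁) * β₁ ^ (j + 1) := by
        intro j; ring
      simp only [this]
  have h1 : M t - G t = (Mtil t - Gtil t) * unfoldE n l := by
    rw [hM t, hR t, Matrix.sub_mul]
    abel
  have hGE : ∀ s, Gtil s * unfoldE n l = G s * foldP n l := by
    intro s; rw [hGtil s, foldP, Matrix.mul_assoc]
  have hsplit : Finset.range t = insert 0 (Finset.Icc 1 (t - 1)) := by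
    ext x; simp; omega
  rw [h1, key t, Matrix.sub_mul, Matrix.smul_mul, Matrix.sum_mul]
  simp only [Matrix.smul_mul, hGE]
  rw [hsplit, Finset.sum_insert (by simp)]
  simp only [Nat.sub_zero, pow_zero, one_smul]
  module
end

section
/- Let β₁ ∈ [0,1), let n, l be positive integers with 2^l dividing n, let C ≥ 0 and δ ∈ [0,1], and let (G_s)_{s≥1} be a sequence of m×n real matrices with ‖G_s‖ ≤ C and ‖G_s(I_{n×n} − P^(l))‖ ≤ δ·‖G_s‖ for all s, in Frobenius norm. With G̃_s = G_s·A^(l), M̃_0 = 0, M̃_s = β₁·M̃_{s−1} + (1−β₁)·G̃_s, R_u = G_u − G̃_u·E^(l), and M_u = M̃_u·E^(l) + R_u, the reconstructed first moment satisfies ‖M_u‖ ≤ (1+δ)·C for every u ≥ 1. -/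
open scoped Matrix

-- Equip matrices with the Frobenius norm.
attribute [local instance] Matrix.frobeniusNormedAddCommGroup Matrix.frobeniusNormedSpace
  Matrix.frobeniusIsBoundedSMul

/-! `A^(l) = 2^{-l} E^(l)ᵀ` and `E^(l) E^(l)ᵀ = 2^l I`, so `P^(l)` is a symmetric idempotent: an
orthogonal projection, under which right multiplication does not increase the Frobenius norm.
Hence each `G̃_s E^(l) = G_s P^(l)` lies in the closed ball of radius `C`; `M̃_u E^(l)` is a convex
combination of `0` and these, so it stays in that ball, while `R_u = G_u (I − P^(l))` has norm at
most `δ C`. -/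

open Matrix Finset

theorem Nat.div_eq_iff_mul_le_and_lt_succ_mul {d j k : ℕ} (hd : 0 < d) :
    k / d = j ↔ j * d ≤ k ∧ k < (j + 1) * d :=
  ⟨by rintro rfl; exact ⟨Nat.div_mul_le_self k d, (add_one_mul _ d).symm ▸ Nat.lt_div_mul_add hd⟩,
    fun h => Nat.div_eq_of_lt_le h.1 h.2⟩

theorem Fin.card_filter_val_div_eq {n d j : ℕ} (hd : 0 < d) (hj : (j + 1) * d ≤ n) :
    #{k : Fin n | (k : ℕ) / d = j} = d := by
  have hfib : map Fin.valEmbedding {k : Fin n | (k : ℕ) / d = j} = Ico (j * d) ((j + 1) * d) := by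
    ext k
    simp only [mem_map, mem_filter, mem_univ, true_and, Fin.valEmbedding_apply, mem_Ico,
      Nat.div_eq_iff_mul_le_and_lt_succ_mul hd]
    exact ⟨by rintro ⟨k, hk, rfl⟩; exact hk, fun hk => ⟨⟨k, by omega⟩, hk, rfl⟩⟩
  rw [← card_map, hfib, Nat.card_Ico, add_one_mul, Nat.add_sub_cancel_left]

section Frobenius

variable {m n : Type*} [Fintype m] [Fintype n]

theorem Matrix.sum_sum_mul_eq_trace_mul_transpose (A B : Matrix m n ℝ) :
    ∑ i, ∑ j, A i j * B i j = trace (A * Bᵀ) := by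
  simp [trace, mul_apply]

theorem Matrix.frobenius_norm_sq_eq_sum (A : Matrix m n ℝ) : ‖A‖ ^ 2 = ∑ i, ∑ j, A i j ^ 2 := by
  rw [frobenius_norm_def, ← Real.rpow_natCast, ← Real.rpow_mul (by positivity)]
  norm_num [Real.norm_eq_abs, sq_abs]

theorem Matrix.sq_sum_sum_mul_le (A B : Matrix m n ℝ) :
    (∑ i, ∑ j, A i j * B i j) ^ 2 ≤ ‖A‖ ^ 2 * ‖B‖ ^ 2 := by
  simp only [frobenius_norm_sq_eq_sum, ← Fintype.sum_prod_type']
  exact sum_mul_sq_le_sq_mul_sq _ _ _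

theorem Matrix.frobenius_norm_mul_le_of_isSymm_of_isIdempotentElem (X : Matrix m n ℝ)
    {Q : Matrix n n ℝ} (hsymm : Q.IsSymm) (hidem : IsIdempotentElem Q) : ‖X * Q‖ ≤ ‖X‖ := by
  have hproj : ‖X * Q‖ ^ 2 = ∑ i, ∑ j, X i j * (X * Q) i j := by
    rw [frobenius_norm_sq_eq_sum]
    simp only [sq, sum_sum_mul_eq_trace_mul_transpose, transpose_mul, hsymm.eq, Matrix.mul_assoc]
    rw [← Matrix.mul_assoc Q, hidem.eq]
  have hcs := sq_sum_sum_mul_le X (X * Q)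
  rw [← hproj, sq (‖X * Q‖ ^ 2), mul_comm (‖X‖ ^ 2)] at hcs
  rcases (norm_nonneg (X * Q)).eq_or_lt with h0 | hpos
  · exact h0 ▸ norm_nonneg X
  · exact (pow_le_pow_iff_left₀ (norm_nonneg _) (norm_nonneg _) two_ne_zero).1
      (le_of_mul_le_mul_left hcs (by positivity))

end Frobenius

theorem Convex.ema_mem {E : Type*} [AddCommGroup E] [Module ℝ E] {S : Set E} (hS : Convex ℝ S)
    {β : ℝ} (hβ0 : 0 ≤ β) (hβ1 : β ≤ 1) {x y : ℕ → E} (hy0 : y 0 ∈ S) (hx : ∀ s, x s ∈ S)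
    (hy : ∀ s, y (s + 1) = β • y s + (1 - β) • x (s + 1)) (s : ℕ) : y s ∈ S := by
  induction s with
  | zero => exact hy0
  | succ s ih => exact hy s ▸ hS ih (hx (s + 1)) hβ0 (sub_nonneg.2 hβ1) (add_sub_cancel β 1)

theorem foldA_eq_smul_transpose_unfoldE (n l : ℕ) :
    foldA n l = (2 ^ l : ℝ)⁻¹ • (unfoldE n l)ᵀ := by
  ext i j
  simp [foldA, unfoldE]

theorem unfoldE_apply (n l : ℕ) (i : Fin (n / 2 ^ l)) (k : Fin n) :
    unfoldE n l i k = if (k : ℕ) / 2 ^ l = i then 1 else 0 := by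
  simp only [unfoldE, of_apply, Nat.div_eq_iff_mul_le_and_lt_succ_mul (Nat.two_pow_pos l)]

theorem unfoldE_mul_transpose (n l : ℕ) : unfoldE n l * (unfoldE n l)ᵀ = (2 ^ l : ℝ) • 1 := by
  ext i j
  simp only [mul_apply, transpose_apply, unfoldE_apply, Matrix.smul_apply, one_apply, smul_eq_mul,
    mul_boole, ← ite_and]
  split_ifs with hij
  · subst hij
    simp only [and_self, sum_boole]
    rw [Fin.card_filter_val_div_eq (Nat.two_pow_pos l)
      ((Nat.le_div_iff_mul_le (Nat.two_pow_pos l)).1 i.isLt), Nat.cast_pow, Nat.cast_two]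
  · exact sum_eq_zero fun k _ => if_neg fun h => hij (Fin.ext (h.2.symm.trans h.1))

theorem unfoldE_mul_foldA (n l : ℕ) : unfoldE n l * foldA n l = 1 := by
  rw [foldA_eq_smul_transpose_unfoldE, Matrix.mul_smul, unfoldE_mul_transpose, smul_smul,
    inv_mul_cancel₀ (by positivity), one_smul]

theorem isSymm_foldP (n l : ℕ) : (foldP n l).IsSymm := by
  rw [IsSymm, foldP, foldA_eq_smul_transpose_unfoldE, smul_mul, transpose_smul, transpose_mul,
    transpose_transpose]

theorem isIdempotentElem_foldP (n l : ℕ) : IsIdempotentElem (foldP n l) := by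
  rw [IsIdempotentElem, foldP, Matrix.mul_assoc, ← Matrix.mul_assoc (unfoldE n l),
    unfoldE_mul_foldA, Matrix.one_mul]

theorem frobenius_norm_mul_foldP_le {m : ℕ} (n l : ℕ) (X : Matrix (Fin m) (Fin n) ℝ) :
    ‖X * foldP n l‖ ≤ ‖X‖ :=
  frobenius_norm_mul_le_of_isSymm_of_isIdempotentElem X (isSymm_foldP n l)
    (isIdempotentElem_foldP n l)

theorem foam_first_moment_bound_general {m : ℕ} (n l : ℕ)
    (β₁ : ℝ) (hβ₁ : β₁ ∈ Set.Ico (0 : ℝ) 1)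
    (C δ : ℝ) (hC : 0 ≤ C) (hδ : δ ∈ Set.Icc (0 : ℝ) 1)
    (G : ℕ → Matrix (Fin m) (Fin n) ℝ)
    (hGC : ∀ s, ‖G s‖ ≤ C)
    (hGδ : ∀ s, ‖G s * ((1 : Matrix (Fin n) (Fin n) ℝ) - foldP n l)‖ ≤ δ * ‖G s‖)
    (Gtil : ℕ → Matrix (Fin m) (Fin (n / 2 ^ l)) ℝ)
    (hGtil : ∀ s, Gtil s = G s * foldA n l)
    (Mtil : ℕ → Matrix (Fin m) (Fin (n / 2 ^ l)) ℝ)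
    (hMtil0 : Mtil 0 = 0)
    (hMtilrec : ∀ s, 1 ≤ s → Mtil s = β₁ • Mtil (s - 1) + (1 - β₁) • Gtil s)
    (R : ℕ → Matrix (Fin m) (Fin n) ℝ)
    (hR : ∀ s, R s = G s - Gtil s * unfoldE n l)
    (M : ℕ → Matrix (Fin m) (Fin n) ℝ)
    (hM : ∀ s, M s = Mtil s * unfoldE n l + R s)
    (u : ℕ) :
    ‖M u‖ ≤ (1 + δ) * C := by
  have hGE : ∀ s, Gtil s * unfoldE n l = G s * foldP n l := fun s => by
    rw [hGtil, foldP, Matrix.mul_assoc]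
  have hME : ∀ s, Mtil s * unfoldE n l ∈ Metric.closedBall 0 C :=
    (convex_closedBall 0 C).ema_mem hβ₁.1 hβ₁.2.le (by simp [hMtil0, hC])
      (fun s => mem_closedBall_zero_iff.2 ((frobenius_norm_mul_foldP_le n l _).trans (hGC s)))
      fun s => by
        rw [hMtilrec (s + 1) s.succ_pos, Nat.add_sub_cancel, Matrix.add_mul, Matrix.smul_mul,
          Matrix.smul_mul, hGE]
  have hRu : R u = G u * (1 - foldP n l) := by rw [hR, hGE, Matrix.mul_sub, Matrix.mul_one]
  calc ‖M u‖ ≤ ‖Mtil u * unfoldE n l‖ + ‖G u * (1 - foldP n l)‖ := hM u ▸ hRu ▸ norm_add_le _ _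
    _ ≤ C + δ * C := add_le_add (mem_closedBall_zero_iff.1 (hME u))
      ((hGδ u).trans (mul_le_mul_of_nonneg_left (hGC u) hδ.1))
    _ = (1 + δ) * C := by ring

/-- Bound on the reconstructed first moment: if `‖G_s‖ ≤ C` and
`‖G_s (I − P^(l))‖ ≤ δ ‖G_s‖` for all `s` (Frobenius norm), then with
`G̃_s = G_s A^(l)`, `M̃_0 = 0`, `M̃_s = β₁ M̃_{s−1} + (1−β₁) G̃_s`,
`R_u = G_u − G̃_u E^(l)`, `M_u = M̃_u E^(l) + R_u`, we have `‖M_u‖ ≤ (1+δ) C`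
for every `u ≥ 1`. -/
theorem foam_first_moment_bound {m : ℕ} (n l : ℕ) (hn : 0 < n) (hl : 0 < l)
    (hdvd : 2 ^ l ∣ n) (β₁ : ℝ) (hβ₁ : β₁ ∈ Set.Ico (0 : ℝ) 1)
    (C δ : ℝ) (hC : 0 ≤ C) (hδ : δ ∈ Set.Icc (0 : ℝ) 1)
    (G : ℕ → Matrix (Fin m) (Fin n) ℝ)
    (hGC : ∀ s, ‖G s‖ ≤ C)
    (hGδ : ∀ s, ‖G s * ((1 : Matrix (Fin n) (Fin n) ℝ) - foldP n l)‖ ≤ δ * ‖G s‖)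
    (Gtil : ℕ → Matrix (Fin m) (Fin (n / 2 ^ l)) ℝ)
    (hGtil : ∀ s, Gtil s = G s * foldA n l)
    (Mtil : ℕ → Matrix (Fin m) (Fin (n / 2 ^ l)) ℝ)
    (hMtil0 : Mtil 0 = 0)
    (hMtilrec : ∀ s, 1 ≤ s → Mtil s = β₁ • Mtil (s - 1) + (1 - β₁) • Gtil s)
    (R : ℕ → Matrix (Fin m) (Fin n) ℝ)
    (hR : ∀ s, R s = G s - Gtil s * unfoldE n l)
    (M : ℕ → Matrix (Fin m) (Fin n) ℝ)
    (hM : ∀ s, M s = Mtil s * unfoldE n l + R s)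
    (u : ℕ) (hu : 1 ≤ u) :
    ‖M u‖ ≤ (1 + δ) * C :=
  foam_first_moment_bound_general n l β₁ hβ₁ C δ hC hδ G hGC hGδ Gtil hGtil Mtil hMtil0 hMtilrec R
    hR M hM u
end

section
/- Let β ∈ (0,1), η₀ > 0, and define η_u = η₀/√u for positive integers u. Then for every integer t ≥ 2, the exponentially weighted step-size sum satisfies Σ_{u=1}^{t−1} η_u · β^{t−u} ≤ (η₀/(1−β))·β^{⌊t/2⌋} + (√2·η₀·β/(1−β))·(1/√t). -/
/-!
Split the sum at `u = ⌊t/2⌋`. On the head `η_u ≤ η₀` and, since `t - u ≥ ⌊t/2⌋` there, the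
geometric weights sum to at most `β^⌊t/2⌋/(1-β)`. On the tail `t ≤ 2u`, so `η_u ≤ √2 η₀/√t`,
while the weights `β^(t-u)` with `u < t` sum to at most `β/(1-β)`.
-/

open Finset Real

lemma sum_Ico_pow_sub_le {β : ℝ} (h0 : 0 ≤ β) (h1 : β < 1) (a : ℕ) {b t : ℕ} (hb : b ≤ t + 1) :
    ∑ u ∈ Ico a b, β ^ (t - u) ≤ β ^ (t + 1 - b) / (1 - β) := by
  rw [sum_Ico_reflect _ _ hb]
  exact geom_sum_Ico_le_of_lt_one h0 h1

lemma one_div_sqrt_le_sqrt_two_div_sqrt {t u : ℝ} (ht : 0 < t) (hu : 0 < u) (htu : t ≤ 2 * u) :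
    1 / √u ≤ √2 / √t := by
  rw [div_le_div_iff₀ (sqrt_pos.2 hu) (sqrt_pos.2 ht), one_mul, ← sqrt_mul zero_le_two]
  exact sqrt_le_sqrt htu

lemma weighted_stepsize_sum_head_le {β η₀ : ℝ} (h0 : 0 ≤ β) (h1 : β < 1) (hη₀ : 0 ≤ η₀)
    {m t : ℕ} (hmt : 2 * m ≤ t) :
    ∑ u ∈ Ico 1 (m + 1), η₀ / √u * β ^ (t - u) ≤ η₀ / (1 - β) * β ^ m := by
  calc ∑ u ∈ Ico 1 (m + 1), η₀ / √u * β ^ (t - u)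
      ≤ ∑ u ∈ Ico 1 (m + 1), η₀ * β ^ (t - u) := by
        refine sum_le_sum fun u hu => ?_
        have hu : (1 : ℝ) ≤ √u := one_le_sqrt.2 (mod_cast (mem_Ico.1 hu).1)
        exact mul_le_mul_of_nonneg_right (div_le_self hη₀ hu) (pow_nonneg h0 _)
    _ ≤ η₀ * (β ^ (t + 1 - (m + 1)) / (1 - β)) := by
        rw [← mul_sum]
        exact mul_le_mul_of_nonneg_left (sum_Ico_pow_sub_le h0 h1 1 (by omega)) hη₀
    _ ≤ η₀ * (β ^ m / (1 - β)) := by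
        have hpow : β ^ (t + 1 - (m + 1)) ≤ β ^ m := pow_le_pow_of_le_one h0 h1.le (by omega)
        exact mul_le_mul_of_nonneg_left (div_le_div_of_nonneg_right hpow (sub_nonneg.2 h1.le)) hη₀
    _ = η₀ / (1 - β) * β ^ m := by ring

lemma weighted_stepsize_sum_tail_le {β η₀ : ℝ} (h0 : 0 ≤ β) (h1 : β < 1) (hη₀ : 0 ≤ η₀)
    {m t : ℕ} (ht : 0 < t) (htm : t ≤ 2 * (m + 1)) :
    ∑ u ∈ Ico (m + 1) t, η₀ / √u * β ^ (t - u) ≤ √2 * η₀ * β / (1 - β) * (1 / √t) := by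
  calc ∑ u ∈ Ico (m + 1) t, η₀ / √u * β ^ (t - u)
      ≤ ∑ u ∈ Ico (m + 1) t, √2 * η₀ / √t * β ^ (t - u) := by
        refine sum_le_sum fun u hu => ?_
        have hmu := (mem_Ico.1 hu).1
        have hu : 1 / √u ≤ √2 / √t :=
          one_div_sqrt_le_sqrt_two_div_sqrt (mod_cast ht) (mod_cast (by omega : 0 < u))
            (mod_cast (by omega : t ≤ 2 * u))
        refine mul_le_mul_of_nonneg_right ?_ (pow_nonneg h0 _)
        calc η₀ / √u = η₀ * (1 / √u) := by ring
          _ ≤ η₀ * (√2 / √t) := by gcongr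
          _ = √2 * η₀ / √t := by ring
    _ ≤ √2 * η₀ / √t * (β ^ (t + 1 - t) / (1 - β)) := by
        rw [← mul_sum]
        exact mul_le_mul_of_nonneg_left (sum_Ico_pow_sub_le h0 h1 _ t.le_succ)
          (by positivity)
    _ = √2 * η₀ * β / (1 - β) * (1 / √t) := by
        rw [Nat.add_sub_cancel_left, pow_one]
        ring

/-- For `β ∈ (0,1)`, `η₀ > 0`, `η_u = η₀/√u` and every integer `t ≥ 2`,
`Σ_{u=1}^{t−1} η_u β^{t−u} ≤ (η₀/(1−β)) β^{⌊t/2⌋} + (√2 η₀ β/(1−β)) (1/√t)`.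
(Here `t / 2` is natural-number division, i.e. `⌊t/2⌋`.) -/
theorem weighted_stepsize_sum_bound (β η₀ : ℝ) (hβ : β ∈ Set.Ioo (0 : ℝ) 1) (hη₀ : 0 < η₀)
    (t : ℕ) (ht : 2 ≤ t) :
    ∑ u ∈ Finset.Icc 1 (t - 1), (η₀ / Real.sqrt u) * β ^ (t - u) ≤
      η₀ / (1 - β) * β ^ (t / 2) +
        Real.sqrt 2 * η₀ * β / (1 - β) * (1 / Real.sqrt t) := by
  have ht_not_min : ¬IsMin t := by simp only [isMin_iff_eq_bot, Nat.bot_eq_zero]; omega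
  rw [Icc_sub_one_right_eq_Ico_of_not_isMin ht_not_min,
    ← sum_Ico_consecutive _ (Nat.le_add_left 1 (t / 2)) (by omega : t / 2 + 1 ≤ t)]
  exact add_le_add (weighted_stepsize_sum_head_le hβ.1.le hβ.2 hη₀.le (Nat.mul_div_le t 2))
    (weighted_stepsize_sum_tail_le hβ.1.le hβ.2 hη₀.le (by omega) (by omega))
end
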